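/- Let d ≥ 1 and let ψ₁, …, ψ_{d²} be d² unit vectors in ℂ^d with Σ_{j=1}^{d²} ψ_j ψ_j† = d·I. Suppose that for every index j one has ∏_{k=1}^{d²} |⟨ψ_j, ψ_k⟩|² = (d+1)^{−(d²−1)} (the factor with k = j being 1). Then |⟨ψ_j, ψ_k⟩|² = 1/(d+1) for all j ≠ k; that is, the vectors ψ₁, …, ψ_{d²} form a SIC POVM. -/

import Mathlib

/-! By the frame identity `∑ k, |⟨φ, ψ k⟩|² = d ‖φ‖²`, the `d² - 1` numbers `|⟨ψ j, ψ k⟩|²`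
with `k ≠ j` sum to `d - 1`, so their arithmetic mean is `1 / (d + 1)`. The product hypothesis
says that their geometric mean is `1 / (d + 1)` as well, and equality in the AM-GM inequality
forces all of them to equal `1 / (d + 1)`. -/

open scoped BigOperators

/-- The standard Hermitian inner product on `ℂ^d`, conjugate-linear in the
first argument: `⟨φ, ψ⟩ = ∑ i, conj (φ i) * ψ i`. -/
noncomputable def inp {d : ℕ} (φ ψ : Fin d → ℂ) : ℂ :=
  ∑ i, (starRingEnd ℂ) (φ i) * ψ i

open Finset Matrix

theorem inp_eq_dotProduct {d : ℕ} (φ ψ : Fin d → ℂ) : inp φ ψ = star φ ⬝ᵥ ψ := rfl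

theorem star_inp {d : ℕ} (φ ψ : Fin d → ℂ) : star (inp φ ψ) = inp ψ φ := by
  rw [inp_eq_dotProduct, inp_eq_dotProduct, star_dotProduct, star_star, dotProduct_comm]

theorem sq_norm_inp_eq_dotProduct_vecMulVec_mulVec {d : ℕ} (φ ψ : Fin d → ℂ) :
    ((‖inp φ ψ‖ ^ 2 : ℝ) : ℂ) = star φ ⬝ᵥ (vecMulVec ψ (star ψ) *ᵥ φ) := by
  rw [vecMulVec_mulVec, dotProduct_smul, op_smul_eq_mul, ← inp_eq_dotProduct,
    ← inp_eq_dotProduct, ← star_inp φ ψ, Complex.star_def, Complex.mul_conj,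
    Complex.normSq_eq_norm_sq]

theorem sum_sq_norm_inp_of_sum_vecMulVec_eq_smul_one {d : ℕ} {ι : Type*} [Fintype ι]
    (ψ : ι → Fin d → ℂ) (c : ℝ)
    (hψ : ∑ i, vecMulVec (ψ i) (star (ψ i)) = (c : ℂ) • (1 : Matrix (Fin d) (Fin d) ℂ))
    (φ : Fin d → ℂ) :
    ((∑ i, ‖inp φ (ψ i)‖ ^ 2 : ℝ) : ℂ) = c * inp φ φ := by
  simp_rw [Complex.ofReal_sum, sq_norm_inp_eq_dotProduct_vecMulVec_mulVec, ← dotProduct_sum,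
    ← sum_mulVec, hψ, smul_mulVec, one_mulVec, dotProduct_smul, inp_eq_dotProduct, smul_eq_mul]

theorem eq_of_sum_eq_card_mul_of_prod_eq_pow_card {ι : Type*} {s : Finset ι} {a : ι → ℝ} {m : ℝ}
    (ha : ∀ i ∈ s, 0 ≤ a i) (hsum : ∑ i ∈ s, a i = #s * m) (hprod : ∏ i ∈ s, a i = m ^ #s) :
    ∀ i ∈ s, a i = m := by
  rcases s.eq_empty_or_nonempty with rfl | hs
  · simp
  have hcard : (#s : ℝ) ≠ 0 := by exact_mod_cast hs.card_pos.ne'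
  have hm : 0 ≤ m := by
    have := sum_nonneg ha
    rw [hsum] at this
    exact nonneg_of_mul_nonneg_right this (by positivity)
  have hw : ∑ _i ∈ s, (#s : ℝ)⁻¹ = 1 := by simp [hcard]
  have hmean : ∑ i ∈ s, (#s : ℝ)⁻¹ * a i = m := by
    rw [← mul_sum, hsum, inv_mul_cancel_left₀ hcard]
  have hgeom : ∏ i ∈ s, a i ^ (#s : ℝ)⁻¹ = m := by
    rw [Real.finsetProd_rpow s a ha, hprod, Real.pow_rpow_inv_natCast hm hs.card_pos.ne']
  have := (Real.geom_mean_eq_arith_mean_weighted_iff_of_pos' s (fun _ ↦ (#s : ℝ)⁻¹) a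
    (fun _ _ ↦ by positivity) hw ha).1 (hgeom.trans hmean.symm)
  simpa [hmean] using this

theorem stmt16_general (d : ℕ)
    (ψ : Fin (d ^ 2) → (Fin d → ℂ)) (hψ : ∀ j, inp (ψ j) (ψ j) = 1)
    (hcomp : ∑ j, Matrix.vecMulVec (ψ j) (star (ψ j))
      = (d : ℂ) • (1 : Matrix (Fin d) (Fin d) ℂ))
    (hprod : ∀ j, ∏ k, ‖inp (ψ j) (ψ k)‖ ^ 2
      = (1 / ((d : ℝ) + 1)) ^ (d ^ 2 - 1)) :
    ∀ j k, j ≠ k → ‖inp (ψ j) (ψ k)‖ ^ 2 = 1 / (d + 1) := by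
  intro j k hjk
  have hself : ‖inp (ψ j) (ψ j)‖ ^ 2 = 1 := by simp [hψ j]
  have hsum : ∑ m, ‖inp (ψ j) (ψ m)‖ ^ 2 = d := by
    have := sum_sq_norm_inp_of_sum_vecMulVec_eq_smul_one ψ d (by exact_mod_cast hcomp) (ψ j)
    rw [hψ j, mul_one] at this
    exact_mod_cast this
  have hcard : #(univ.erase j) = d ^ 2 - 1 := by simp
  have hcard_real : (#(univ.erase j) : ℝ) = (d : ℝ) ^ 2 - 1 := by
    rw [hcard, Nat.cast_sub j.pos, Nat.cast_pow, Nat.cast_one]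
  refine eq_of_sum_eq_card_mul_of_prod_eq_pow_card (a := fun m ↦ ‖inp (ψ j) (ψ m)‖ ^ 2)
    (fun _ _ ↦ sq_nonneg _) ?_ ?_ k (mem_erase.2 ⟨hjk.symm, mem_univ k⟩)
  · rw [← add_sum_erase _ _ (mem_univ j), hself] at hsum
    rw [hcard_real]
    field_simp
    linear_combination ((d : ℝ) + 1) * hsum
  · rw [hcard, ← hprod j, ← mul_prod_erase _ _ (mem_univ j), hself, one_mul]

theorem stmt16 (d : ℕ) (hd : 1 ≤ d)
    (ψ : Fin (d ^ 2) → (Fin d → ℂ)) (hψ : ∀ j, inp (ψ j) (ψ j) = 1)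
    (hcomp : ∑ j, Matrix.vecMulVec (ψ j) (star (ψ j))
      = (d : ℂ) • (1 : Matrix (Fin d) (Fin d) ℂ))
    (hprod : ∀ j, ∏ k, ‖inp (ψ j) (ψ k)‖ ^ 2
      = (1 / ((d : ℝ) + 1)) ^ (d ^ 2 - 1)) :
    ∀ j k, j ≠ k → ‖inp (ψ j) (ψ k)‖ ^ 2 = 1 / (d + 1) :=
  stmt16_general d ψ hψ hcomp hprod
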